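/- Let R be a commutative ring, I an ideal of R, M a faithful multiplication R-module (i.e. M has zero annihilator and every submodule N of M satisfies N = (N : M)M), J a finitely generated faithful multiplication ideal of R, and P a submodule of JM. Then P is an I-primary submodule of the R-module JM if and only if (P : J) = {m ∈ M : Jm ⊆ P} is an I-primary submodule of M. -/

import Mathlib

/-- For an ideal `J` of `R` and a submodule `N` of `M`, `(N : J)` is the
submodule `{m : M | ∀ a ∈ J, a • m ∈ N}`. -/
def colonIdeal {R : Type*} [CommRing R] {M : Type*} [AddCommGroup M] [Module R M]
    (N : Submodule R M) (J : Ideal R) : Submodule R M where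
  carrier := {m : M | ∀ a ∈ J, a • m ∈ N}
  add_mem' := fun ha hb a haJ => by
    rw [smul_add]; exact N.add_mem (ha a haJ) (hb a haJ)
  zero_mem' := fun a _ => by rw [smul_zero]; exact N.zero_mem
  smul_mem' := fun r m hm a haJ => by
    rw [smul_comm]; exact N.smul_mem r (hm a haJ)

/-- `P` is an `I`-primary submodule of the `R`-module `T` (a submodule of `M`
containing `P`): `P` is proper in `T` and whenever `r • m ∈ P \ I • P` with
`m ∈ T`, either `m ∈ P` or `r ∈ √(P :  T)`. Taking `T = ⊤` recovers the usual
notion of an `I`-primary submodule of `M`. -/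
def IsIPrimaryIn {R : Type*} [CommRing R] {M : Type*} [AddCommGroup M] [Module R M]
    (I : Ideal R) (P T : Submodule R M) : Prop :=
  P < T ∧ ∀ r : R, ∀ m ∈ T, r • m ∈ P → r • m ∉ I • P →
    m ∈ P ∨ r ∈ (P.colon T).radical

/-!
Nakayama's lemma shows that for a finitely generated faithful multiplication ideal `J` the
elements `d` with `d J ⊆ (a)` for some `a ∈ J` generate the unit ideal: `J` is locally principal.
Working locally, `J (N : J) = N` whenever `N ≤ J M`, and `(J X : J) = X` because a faithful
multiplication module has no nonzero element killed by the faithful ideal `J`. Hence `X ↦ J X` is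
an order isomorphism from the submodules of `M` onto those of `J M`, commuting with `I •` and
preserving colon ideals. Phrased for submodules instead of elements, the `I`-primary condition is
transported along this isomorphism.
-/

section

variable {R : Type*} [CommRing R] {M : Type*} [AddCommGroup M] [Module R M]

theorem Submodule.ideal_smul_left_comm (I J : Ideal R) (N : Submodule R M) :
    I • J • N = J • I • N := by
  rw [← Submodule.smul_assoc, ← Submodule.smul_assoc, Ideal.smul_eq_mul, Ideal.smul_eq_mul,
    mul_comm]

section colonIdeal

variable {N N' : Submodule R M} {J : Ideal R}

theorem colonIdeal_mono (h : N ≤ N') : colonIdeal N J ≤ colonIdeal N' J :=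
  fun _ hm a ha => h (hm a ha)

theorem smul_colonIdeal_le (N : Submodule R M) (J : Ideal R) : J • colonIdeal N J ≤ N :=
  Submodule.smul_le.2 fun _ ha _ hm => hm _ ha

theorem le_colonIdeal_smul (X : Submodule R M) (J : Ideal R) : X ≤ colonIdeal (J • X) J :=
  fun _ hx _ ha => Submodule.smul_mem_smul ha hx

theorem colonIdeal_bot_eq_bot (hM : (⊤ : Submodule R M).annihilator = ⊥)
    (hMmult : ∀ N : Submodule R M, (N.colon ⊤) • (⊤ : Submodule R M) = N)
    (hJ : (J : Submodule R R).annihilator = ⊥) :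
    colonIdeal (⊥ : Submodule R M) J = ⊥ := by
  refine eq_bot_iff.2 fun m hm => ?_
  set B : Ideal R := (Submodule.span R {m}).colon ⊤
  have hJm : J • Submodule.span R {m} = ⊥ :=
    eq_bot_iff.2 <| Submodule.smul_le.2 fun b hb y hy => by
      obtain ⟨c, rfl⟩ := Submodule.mem_span_singleton.1 hy
      rw [smul_comm]
      exact Submodule.smul_mem _ c (hm b hb)
  have hJB : J * B = ⊥ := by
    rw [← le_bot_iff, ← hM, Submodule.le_annihilator_iff, ← Ideal.smul_eq_mul,
      Submodule.smul_assoc, hMmult, hJm]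
  have hB : B = ⊥ := by
    rw [← le_bot_iff, ← hJ, Submodule.le_annihilator_iff, Ideal.smul_eq_mul, mul_comm, hJB]
  have hspan : Submodule.span R {m} = ⊥ := by
    rw [← hMmult (Submodule.span R {m})]
    change B • ⊤ = ⊥
    rw [hB, Submodule.bot_smul]
  exact Submodule.span_singleton_eq_bot.1 hspan

end colonIdeal

/-- `J` becomes principal, generated by `a`, after inverting any `d` in this set. -/
def Ideal.principalizers (J : Ideal R) : Set R :=
  {d | ∃ a ∈ J, ∀ b ∈ J, d * b ∈ Ideal.span {a}}

theorem Ideal.span_principalizers_eq_top {J : Ideal R} (hfg : J.FG)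
    (hfaithful : (J : Submodule R R).annihilator = ⊥)
    (hmult : ∀ K : Ideal R, K ≤ J → ∃ C : Ideal R, K = C * J) :
    Ideal.span J.principalizers = ⊤ := by
  obtain ⟨s, hs⟩ := hfg
  set K := Ideal.span J.principalizers
  have hgen : ∀ a ∈ (s : Set R), a ∈ K • J := fun a ha => by
    have haJ : a ∈ J := hs ▸ Submodule.subset_span ha
    obtain ⟨C, hC⟩ := hmult _ ((Ideal.span_singleton_le_iff_mem J).2 haJ)
    have hCK : C ≤ K := fun c hc =>
      Submodule.subset_span ⟨a, haJ, fun b hb => hC ▸ Ideal.mul_mem_mul hc hb⟩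
    rw [Ideal.smul_eq_mul]
    exact Ideal.mul_mono_left hCK (hC ▸ Ideal.mem_span_singleton_self a)
  have hJK : (J : Submodule R R) ≤ K • J := hs ▸ Submodule.span_le.2 (hs ▸ hgen)
  obtain ⟨r, hr1, hr0⟩ :=
    Submodule.exists_sub_one_mem_and_smul_eq_zero_of_fg_of_le_smul K _ ⟨s, hs⟩ hJK
  have hr : r = 0 := by
    rw [← Submodule.mem_bot R, ← hfaithful]
    exact Submodule.mem_annihilator.2 hr0
  rw [hr, zero_sub] at hr1
  exact (Ideal.eq_top_iff_one K).2 (by simpa using K.neg_mem hr1)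

section Cancellation

variable {J : Ideal R}

theorem exists_smul_eq_smul_of_mem_smul {a d : R} (hd : ∀ b ∈ J, d * b ∈ Ideal.span {a})
    {X : Submodule R M} {x : M} (hx : x ∈ J • X) : ∃ y ∈ X, d • x = a • y := by
  refine Submodule.smul_induction_on (p := fun x => ∃ y ∈ X, d • x = a • y) hx ?_ ?_
  · intro b hb z hz
    obtain ⟨f, hf⟩ := Ideal.mem_span_singleton'.1 (hd b hb)
    exact ⟨f • z, X.smul_mem f hz, by rw [smul_smul, ← hf, mul_comm, mul_smul]⟩
  · rintro x x' ⟨y, hy, hxy⟩ ⟨y', hy', hxy'⟩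
    exact ⟨y + y', X.add_mem hy hy', by rw [smul_add, smul_add, hxy, hxy']⟩

variable (hJ : Ideal.span J.principalizers = ⊤)
include hJ

theorem smul_colonIdeal_eq {N : Submodule R M} (hN : N ≤ J • ⊤) : J • colonIdeal N J = N := by
  refine (smul_colonIdeal_le N J).antisymm fun x hx => ?_
  refine Submodule.mem_of_span_eq_top_of_smul_pow_mem _ _ hJ x fun ⟨d, a, ha, hd⟩ => ⟨2, ?_⟩
  obtain ⟨y, -, hy⟩ := exists_smul_eq_smul_of_mem_smul hd (hN hx)
  have hdy : d • y ∈ colonIdeal N J := fun b hb => by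
    obtain ⟨f, hf⟩ := Ideal.mem_span_singleton'.1 (hd b hb)
    rw [smul_smul, mul_comm, ← hf, mul_smul, ← hy]
    exact N.smul_mem f (N.smul_mem d hx)
  rw [pow_two, mul_smul, hy, smul_comm]
  exact Submodule.smul_mem_smul ha hdy

variable (htf : colonIdeal (⊥ : Submodule R M) J = ⊥)
include htf

theorem colonIdeal_smul_eq (X : Submodule R M) : colonIdeal (J • X) J = X := by
  refine le_antisymm (fun x hx => ?_) (le_colonIdeal_smul X J)
  refine Submodule.mem_of_span_eq_top_of_smul_pow_mem _ _ hJ x fun ⟨d, a, ha, hd⟩ => ⟨2, ?_⟩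
  obtain ⟨y, hyX, hy⟩ := exists_smul_eq_smul_of_mem_smul hd (hx a ha)
  have hz : d • (d • x - y) ∈ colonIdeal ⊥ J := fun b hb => by
    obtain ⟨f, hf⟩ := Ideal.mem_span_singleton'.1 (hd b hb)
    rw [smul_smul, mul_comm, ← hf, mul_smul, smul_sub, smul_comm a d x, hy, sub_self, smul_zero]
    exact zero_mem _
  rw [htf, Submodule.mem_bot, smul_sub, sub_eq_zero] at hz
  rw [pow_two, mul_smul, hz]
  exact X.smul_mem d hyX

theorem smul_le_smul_iff_of_principalizers {X Y : Submodule R M} : J • X ≤ J • Y ↔ X ≤ Y :=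
  ⟨fun h => colonIdeal_smul_eq hJ htf X ▸ colonIdeal_smul_eq hJ htf Y ▸ colonIdeal_mono h,
    fun h => smul_mono_right J h⟩

end Cancellation

section Primary

variable {I J : Ideal R} {P Q T : Submodule R M}

theorem isIPrimaryIn_iff_forall_submodule :
    IsIPrimaryIn I P T ↔ P < T ∧ ∀ (r : R) (X : Submodule R M), X ≤ T → r ∈ P.colon X →
      r ∉ (I • P).colon X → X ≤ P ∨ r ∈ (P.colon T).radical := by
  refine and_congr_right fun _ => ⟨fun h r X hXT hrP hrIP => ?_, fun h r m hm hrP hrIP => ?_⟩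
  · rw [Submodule.mem_colon] at hrP hrIP
    push Not at hrIP
    obtain ⟨x₀, hx₀X, hx₀⟩ := hrIP
    refine or_iff_not_imp_right.2 fun hrad x hx => ?_
    have hmem : ∀ x ∈ X, r • x ∉ I • P → x ∈ P := fun x hx hx' =>
      (h r x (hXT hx) (hrP x hx) hx').resolve_right hrad
    by_cases hc : r • x ∈ I • P
    · -- then `r • (x + x₀) ∉ I • P`
      have hsum : x + x₀ ∈ P := hmem _ (X.add_mem hx hx₀X) fun h' =>
        hx₀ (by simpa [smul_add] using sub_mem h' hc)
      simpa using P.sub_mem hsum (hmem x₀ hx₀X hx₀)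
    · exact hmem x hx hc
  · refine (h r (Submodule.span R {m}) ((Submodule.span_singleton_le_iff_mem m T).2 hm)
      (Submodule.mem_colon_span_singleton.2 hrP) (mt Submodule.mem_colon_span_singleton.1 hrIP)
      ).imp_left (Submodule.span_singleton_le_iff_mem m P).1

variable (hcancel : ∀ X Y : Submodule R M, J • X ≤ J • Y ↔ X ≤ Y)
include hcancel

theorem colon_smul_smul_of_cancel (Q X : Submodule R M) :
    (J • Q).colon ((J • X : Submodule R M) : Set M) = Q.colon X := by
  ext r
  rw [Submodule.mem_colon_iff_le, Submodule.mem_colon_iff_le,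
    ← Submodule.ideal_span_singleton_smul, ← Submodule.ideal_span_singleton_smul,
    Submodule.ideal_smul_left_comm, hcancel]

theorem isIPrimaryIn_smul_iff_of_cancel (hsurj : ∀ N ≤ J • T, ∃ X, J • X = N) :
    IsIPrimaryIn I (J • Q) (J • T) ↔ IsIPrimaryIn I Q T := by
  have hlt : J • Q < J • T ↔ Q < T := by simp only [lt_iff_le_not_ge, hcancel]
  rw [isIPrimaryIn_iff_forall_submodule, isIPrimaryIn_iff_forall_submodule, hlt,
    Submodule.ideal_smul_left_comm, colon_smul_smul_of_cancel hcancel]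
  refine and_congr_right fun _ => ⟨fun h r X hXT => ?_, fun h r N hN => ?_⟩
  · simpa only [colon_smul_smul_of_cancel hcancel, hcancel] using
      h r (J • X) (smul_mono_right J hXT)
  · obtain ⟨X, rfl⟩ := hsurj N hN
    simpa only [colon_smul_smul_of_cancel hcancel, hcancel] using h r X ((hcancel X T).1 hN)

end Primary

end

theorem stmt15 {R : Type*} [CommRing R] {M : Type*} [AddCommGroup M] [Module R M]
    (I : Ideal R) (J : Ideal R) (P : Submodule R M)
    (hMfaithful : (⊤ : Submodule R M).annihilator = ⊥)
    (hMmult : ∀ N : Submodule R M, (N.colon ⊤) • (⊤ : Submodule R M) = N)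
    (hJfg : J.FG)
    (hJfaithful : (J : Submodule R R).annihilator = ⊥)
    (hJmult : ∀ K : Ideal R, K ≤ J → ∃ C : Ideal R, K = C * J)
    (hPJM : P ≤ J • (⊤ : Submodule R M)) :
    IsIPrimaryIn I P (J • (⊤ : Submodule R M)) ↔
      IsIPrimaryIn I (colonIdeal P J) (⊤ : Submodule R M) := by
  have hJ := Ideal.span_principalizers_eq_top hJfg hJfaithful hJmult
  have htf := colonIdeal_bot_eq_bot hMfaithful hMmult hJfaithful
  have hcancel : ∀ X Y : Submodule R M, J • X ≤ J • Y ↔ X ≤ Y := fun _ _ =>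
    smul_le_smul_iff_of_principalizers hJ htf
  rw [← isIPrimaryIn_smul_iff_of_cancel hcancel fun N hN => ⟨_, smul_colonIdeal_eq hJ hN⟩,
    smul_colonIdeal_eq hJ hPJM]
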